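/- arXiv:1101.3938 — 2 statements merged into one kernel-verified Lean document; each statement's English description precedes it below -/
import Mathlib

section
/- Let k be an algebraically closed field, m, n, r integers with 0 ≤ r ≤ m and r ≤ n, and let E_r ∈ Mat_{m×n}(k) be the matrix with (E_r)_{ij} = 1 if i = j ≤ r and 0 otherwise. Let X ∈ Mat_{m×n}(k) with rank X ≤ r. Then there exist an invertible lower triangular matrix A ∈ GL_m(k) and an invertible upper triangular matrix B ∈ GL_n(k) with X = A·E_r·B⁻¹ if and only if for every i with 1 ≤ i ≤ r the i-th leading principal minor of X (the determinant of the submatrix formed by the first i rows and the first i columns of X) is nonzero. -/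
/-!
If `A` is lower and `C` upper triangular, the leading `i × i` block of `A * M * C` is the product
of the leading blocks of `A`, `M`, `C`; so the leading minors of `A * E_r * C` are units.

Conversely, elimination with the pivot `X 0 0` writes `X = L * diag(X 0 0, S) * U` with `L`, `U`
unitriangular and `S` the Schur complement, whose leading minors are those of `X` divided by
`X 0 0`. Iterating `r` times gives `X = A * S * C` with `S` agreeing with `E_r` on its first `r`
rows and columns. A nonzero entry of `S` in the remaining corner, together with the identity block,
would give an invertible `(r + 1) × (r + 1)` submatrix, contradicting `rank X ≤ r`.
-/

namespace Matrix

variable {R K : Type*} [CommRing R] [Field K] {m n : ℕ}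

theorem submatrix_castLE_mul_of_isLowerTriangular {ι κ : Type*} [Fintype ι]
    {A : Matrix (Fin m) (Fin m) R} (hA : A.IsLowerTriangular) (M : Matrix (Fin m) ι R)
    {i : ℕ} (h : i ≤ m) (g : κ → ι) :
    (A * M).submatrix (Fin.castLE h) g
      = A.submatrix (Fin.castLE h) (Fin.castLE h) * M.submatrix (Fin.castLE h) g := by
  ext p q
  refine (Fintype.sum_of_injective _ (Fin.castLE_injective h) _ _ ?_ fun _ => rfl).symm
  rintro t ht
  refine mul_eq_zero_of_left (hA (show p.castLE h < t from ?_)) _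
  by_contra! hle
  exact ht ⟨⟨t, Nat.lt_of_le_of_lt hle p.isLt⟩, rfl⟩

theorem submatrix_castLE_mul_of_isUpperTriangular {ι κ : Type*} [Fintype ι]
    {C : Matrix (Fin n) (Fin n) R} (hC : C.IsUpperTriangular) (M : Matrix ι (Fin n) R)
    {i : ℕ} (h : i ≤ n) (g : κ → ι) :
    (M * C).submatrix g (Fin.castLE h)
      = M.submatrix g (Fin.castLE h) * C.submatrix (Fin.castLE h) (Fin.castLE h) := by
  ext p q
  refine (Fintype.sum_of_injective _ (Fin.castLE_injective h) _ _ ?_ fun _ => rfl).symm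
  rintro t ht
  refine mul_eq_zero_of_right _ (hC (show q.castLE h < t from ?_))
  by_contra! hle
  exact ht ⟨⟨t, Nat.lt_of_le_of_lt hle q.isLt⟩, rfl⟩

theorem IsLowerTriangular.isUnit_det_submatrix_castLE {A : Matrix (Fin m) (Fin m) R}
    (hA : A.IsLowerTriangular) (hdet : IsUnit A.det) {i : ℕ} (h : i ≤ m) :
    IsUnit (A.submatrix (Fin.castLE h) (Fin.castLE h)).det := by
  rw [det_of_isLowerTriangular (A.submatrix (Fin.castLE h) (Fin.castLE h))
    fun _ _ hpq => hA hpq]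
  rw [det_of_isLowerTriangular _ hA, IsUnit.prod_univ_iff] at hdet
  exact IsUnit.prod_univ_iff.mpr fun s => hdet _

theorem IsUpperTriangular.isUnit_det_submatrix_castLE {C : Matrix (Fin n) (Fin n) R}
    (hC : C.IsUpperTriangular) (hdet : IsUnit C.det) {i : ℕ} (h : i ≤ n) :
    IsUnit (C.submatrix (Fin.castLE h) (Fin.castLE h)).det := by
  rw [det_of_isUpperTriangular (M := C.submatrix (Fin.castLE h) (Fin.castLE h))
    fun _ _ hpq => hC hpq]
  rw [det_of_isUpperTriangular hC, IsUnit.prod_univ_iff] at hdet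
  exact IsUnit.prod_univ_iff.mpr fun s => hdet _

theorem det_submatrix_castLE_mul_mul_ne_zero_iff {A : Matrix (Fin m) (Fin m) R}
    {C : Matrix (Fin n) (Fin n) R} (hA : A.IsLowerTriangular) (hAdet : IsUnit A.det)
    (hC : C.IsUpperTriangular) (hCdet : IsUnit C.det) (M : Matrix (Fin m) (Fin n) R)
    {i : ℕ} (him : i ≤ m) (hin : i ≤ n) :
    ((A * M * C).submatrix (Fin.castLE him) (Fin.castLE hin)).det ≠ 0
      ↔ (M.submatrix (Fin.castLE him) (Fin.castLE hin)).det ≠ 0 := by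
  rw [submatrix_castLE_mul_of_isUpperTriangular hC, submatrix_castLE_mul_of_isLowerTriangular hA,
    det_mul, det_mul, ne_eq, ne_eq, (hC.isUnit_det_submatrix_castLE hCdet hin).mul_left_eq_zero.not,
    (hA.isUnit_det_submatrix_castLE hAdet him).mul_right_eq_zero.not]

theorem BlockTriangular.inv {ι α : Type*} [Fintype ι] [DecidableEq ι] [LinearOrder α]
    {M : Matrix ι ι R} {b : ι → α} (hM : M.BlockTriangular b) : M⁻¹.BlockTriangular b := by
  by_cases h : IsUnit M.det
  · have := M.invertibleOfIsUnitDet h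
    exact blockTriangular_inv_of_blockTriangular hM
  · rw [nonsing_inv_apply_not_isUnit _ h]
    exact blockTriangular_zero

/-- The block-diagonal matrix `diag(a, M)`. -/
def blockCons (a : R) (M : Matrix (Fin m) (Fin n) R) : Matrix (Fin (m + 1)) (Fin (n + 1)) R :=
  of (Fin.cons (Fin.cons a 0) fun i => Fin.cons 0 (M i))

section blockCons

variable (a : R) (M : Matrix (Fin m) (Fin n) R)

@[simp] theorem blockCons_zero_zero : blockCons a M 0 0 = a := rfl
@[simp] theorem blockCons_zero_succ (j : Fin n) : blockCons a M 0 j.succ = 0 := rfl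
@[simp] theorem blockCons_succ_zero (i : Fin m) : blockCons a M i.succ 0 = 0 := rfl
@[simp] theorem blockCons_succ_succ (i : Fin m) (j : Fin n) :
    blockCons a M i.succ j.succ = M i j := rfl

@[simp] theorem blockCons_submatrix_succ_succ :
    (blockCons a M).submatrix Fin.succ Fin.succ = M := rfl

theorem blockCons_mul {l : ℕ} (b : R) (N : Matrix (Fin n) (Fin l) R) :
    blockCons a M * blockCons b N = blockCons (a * b) (M * N) := by
  ext i j
  cases i using Fin.cases <;> cases j using Fin.cases <;>
    simp [mul_apply, Fin.sum_univ_succ]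

theorem det_blockCons (M : Matrix (Fin m) (Fin m) R) : (blockCons a M).det = a * M.det := by
  rw [det_succ_column_zero, Fin.sum_univ_succ]
  simp

theorem submatrix_castLE_blockCons {i : ℕ} (him : i ≤ m) (hin : i ≤ n) :
    (blockCons a M).submatrix (Fin.castLE (Nat.succ_le_succ him))
        (Fin.castLE (Nat.succ_le_succ hin))
      = blockCons a (M.submatrix (Fin.castLE him) (Fin.castLE hin)) := by
  ext p q
  cases p using Fin.cases <;> cases q using Fin.cases <;> rfl

end blockCons

theorem IsLowerTriangular.blockCons {a : R} {M : Matrix (Fin m) (Fin m) R}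
    (hM : M.IsLowerTriangular) : (blockCons a M).IsLowerTriangular := by
  intro i j hij
  cases i using Fin.cases <;> cases j using Fin.cases
  · exact absurd hij (lt_irrefl _)
  · rfl
  · rfl
  · exact hM (Fin.succ_lt_succ_iff.mp hij)

theorem IsUpperTriangular.blockCons {a : R} {M : Matrix (Fin m) (Fin m) R}
    (hM : M.IsUpperTriangular) : (blockCons a M).IsUpperTriangular := by
  intro i j hij
  cases i using Fin.cases <;> cases j using Fin.cases
  · exact absurd hij (lt_irrefl _)
  · rfl
  · rfl
  · exact hM (Fin.succ_lt_succ_iff.mp hij)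


theorem isLowerTriangular_one_updateCol_zero (c : Fin (m + 1) → R) :
    ((1 : Matrix (Fin (m + 1)) (Fin (m + 1)) R).updateCol 0 c).IsLowerTriangular := by
  intro i j hij
  have hj : j ≠ 0 := Fin.ne_zero_of_lt hij
  simp [hj, (show i ≠ j from ne_of_lt hij)]

theorem isUpperTriangular_one_updateRow_zero (c : Fin (n + 1) → R) :
    ((1 : Matrix (Fin (n + 1)) (Fin (n + 1)) R).updateRow 0 c).IsUpperTriangular := by
  intro i j hij
  have hi : i ≠ 0 := Fin.ne_zero_of_lt hij
  simp [updateRow_apply, hi, (show i ≠ j from ne_of_gt hij)]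

theorem det_one_updateCol_zero (c : Fin (m + 1) → R) :
    ((1 : Matrix (Fin (m + 1)) (Fin (m + 1)) R).updateCol 0 c).det = c 0 := by
  rw [det_of_isLowerTriangular _ (isLowerTriangular_one_updateCol_zero c), Fin.prod_univ_succ]
  simp [Fin.succ_ne_zero]

theorem det_one_updateRow_zero (c : Fin (n + 1) → R) :
    ((1 : Matrix (Fin (n + 1)) (Fin (n + 1)) R).updateRow 0 c).det = c 0 := by
  rw [det_of_isUpperTriangular (isUpperTriangular_one_updateRow_zero c), Fin.prod_univ_succ]
  simp [updateRow_apply, Fin.succ_ne_zero]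


def schurComplement₀₀ (X : Matrix (Fin (m + 1)) (Fin (n + 1)) K) : Matrix (Fin m) (Fin n) K :=
  of fun i j => X i.succ j.succ - X i.succ 0 * X 0 j.succ / X 0 0

theorem eq_mul_blockCons_schurComplement₀₀_mul {X : Matrix (Fin (m + 1)) (Fin (n + 1)) K}
    (h : X 0 0 ≠ 0) :
    X = (1 : Matrix (Fin (m + 1)) (Fin (m + 1)) K).updateCol 0 (fun i => X i 0 / X 0 0)
      * blockCons (X 0 0) (schurComplement₀₀ X)
      * (1 : Matrix (Fin (n + 1)) (Fin (n + 1)) K).updateRow 0 (fun j => X 0 j / X 0 0) := by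
  ext i j
  cases i using Fin.cases <;> cases j using Fin.cases <;>
    simp [mul_apply, Fin.sum_univ_succ, updateCol_apply, updateRow_apply, one_apply,
      schurComplement₀₀, h, (Fin.succ_ne_zero _).symm]
  · field_simp
  · ring


def rankNormalForm (r : ℕ) : Matrix (Fin m) (Fin n) R :=
  of fun i j => if (i : ℕ) = j ∧ (i : ℕ) < r then 1 else 0

def IsRankNormalFormOffCorner (r : ℕ) (S : Matrix (Fin m) (Fin n) R) : Prop :=
  ∀ (i : Fin m) (j : Fin n), ((i : ℕ) < r ∨ (j : ℕ) < r) → S i j = rankNormalForm r i j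

theorem submatrix_castLE_rankNormalForm {r i : ℕ} (hi : i ≤ r) (him : i ≤ m) (hin : i ≤ n) :
    (rankNormalForm r : Matrix (Fin m) (Fin n) R).submatrix (Fin.castLE him) (Fin.castLE hin)
      = 1 := by
  ext p q
  simp [rankNormalForm, one_apply, Fin.ext_iff, p.isLt.trans_le hi]

theorem IsRankNormalFormOffCorner.blockCons {r : ℕ} {T : Matrix (Fin m) (Fin n) R}
    (hT : IsRankNormalFormOffCorner r T) : IsRankNormalFormOffCorner (r + 1) (blockCons 1 T) := by
  intro i j hij
  cases i using Fin.cases <;> cases j using Fin.cases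
  · simp [rankNormalForm]
  · simp [rankNormalForm]
  · simp [rankNormalForm]
  · simp only [Fin.val_succ, add_lt_add_iff_right] at hij
    simpa [rankNormalForm] using hT _ _ hij

theorem IsRankNormalFormOffCorner.eq_of_rank_le {r : ℕ}
    {S : Matrix (Fin m) (Fin n) K} (hS : IsRankNormalFormOffCorner r S) (hrank : S.rank ≤ r) :
    S = rankNormalForm r := by
  by_contra hne
  obtain ⟨p, q, hpq⟩ : ∃ p q, S p q ≠ rankNormalForm r p q := by
    by_contra! h
    exact hne (ext h)
  have hp : r ≤ p := by by_contra! h; exact hpq (hS p q (Or.inl h))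
  have hq : r ≤ q := by by_contra! h; exact hpq (hS p q (Or.inr h))
  have hSpq : S p q ≠ 0 := by simpa [rankNormalForm, not_lt.mpr hp] using hpq
  let f : Fin (r + 1) → Fin m := Fin.lastCases p (Fin.castLE (hp.trans p.isLt.le))
  let g : Fin (r + 1) → Fin n := Fin.lastCases q (Fin.castLE (hq.trans q.isLt.le))
  have hdiag : S.submatrix f g = diagonal (Fin.lastCases (S p q) fun _ => 1) := by
    ext i j
    induction i using Fin.lastCases with
    | last =>
      induction j using Fin.lastCases with
      | last => simp [f, g]
      | cast t =>
        have h := hS p (Fin.castLE (hq.trans q.isLt.le) t) (Or.inr t.isLt)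
        simp_all [f, g, rankNormalForm, (Fin.castSucc_lt_last t).ne',
          Nat.ne_of_gt (t.isLt.trans_le hp)]
    | cast s =>
      have h := hS (Fin.castLE (hp.trans p.isLt.le) s) (g j) (Or.inl s.isLt)
      induction j using Fin.lastCases with
      | last =>
        simp_all [f, g, rankNormalForm, (Fin.castSucc_lt_last s).ne,
          Nat.ne_of_lt (s.isLt.trans_le hq)]
      | cast t =>
        simp_all [f, g, rankNormalForm, diagonal_apply, Fin.ext_iff]
  have hdet : (S.submatrix f g).det ≠ 0 := by
    simpa [hdiag, Fin.prod_univ_castSucc] using hSpq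
  have := (rank_of_det_ne_zero hdet).symm.trans_le ((S.rank_submatrix_le f g).trans hrank)
  simp at this

theorem exists_lower_mul_rankNormalFormOffCorner_mul_upper (r : ℕ) (hrm : r ≤ m) (hrn : r ≤ n)
    (X : Matrix (Fin m) (Fin n) K)
    (hX : ∀ (i : ℕ) (hi : i ≤ r), 1 ≤ i →
      (X.submatrix (Fin.castLE (hi.trans hrm)) (Fin.castLE (hi.trans hrn))).det ≠ 0) :
    ∃ (A : Matrix (Fin m) (Fin m) K) (S : Matrix (Fin m) (Fin n) K)
      (C : Matrix (Fin n) (Fin n) K), A.IsLowerTriangular ∧ IsUnit A.det ∧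
      C.IsUpperTriangular ∧ IsUnit C.det ∧ IsRankNormalFormOffCorner r S ∧ X = A * S * C := by
  induction r generalizing m n with
  | zero =>
    exact ⟨1, X, 1, blockTriangular_one, by simp, blockTriangular_one, by simp,
      fun i j h => by simp at h, by simp⟩
  | succ r ih =>
    obtain ⟨m, rfl⟩ : ∃ m', m = m' + 1 := ⟨m - 1, by omega⟩
    obtain ⟨n, rfl⟩ : ∃ n', n = n' + 1 := ⟨n - 1, by omega⟩
    have ha : X 0 0 ≠ 0 := by
      simpa [det_fin_one] using hX 1 (by omega) le_rfl
    have hXeq := eq_mul_blockCons_schurComplement₀₀_mul ha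
    set L := (1 : Matrix (Fin (m + 1)) (Fin (m + 1)) K).updateCol 0 (fun i => X i 0 / X 0 0)
    set U := (1 : Matrix (Fin (n + 1)) (Fin (n + 1)) K).updateRow 0 (fun j => X 0 j / X 0 0)
    have hL : L.IsLowerTriangular := isLowerTriangular_one_updateCol_zero _
    have hU : U.IsUpperTriangular := isUpperTriangular_one_updateRow_zero _
    have hLdet : IsUnit L.det := by simp [L, det_one_updateCol_zero, ha]
    have hUdet : IsUnit U.det := by simp [U, det_one_updateRow_zero, ha]
    obtain ⟨A, S, C, hA, hAdet, hC, hCdet, hS, hSeq⟩ :=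
      ih (by omega) (by omega) (schurComplement₀₀ X) fun i hi _ => by
        have h := hX (i + 1) (by omega) (by omega)
        rw [hXeq, det_submatrix_castLE_mul_mul_ne_zero_iff hL hLdet hU hUdet,
          submatrix_castLE_blockCons _ _ (hi.trans (by omega)) (hi.trans (by omega)),
          det_blockCons] at h
        exact right_ne_zero_of_mul h
    refine ⟨L * blockCons (X 0 0) A, blockCons 1 S, blockCons 1 C * U, hL.mul hA.blockCons,
      ?_, hC.blockCons.mul hU, ?_, hS.blockCons, ?_⟩
    · simpa [det_blockCons, ha] using hLdet.mul hAdet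
    · simpa [det_blockCons] using hCdet.mul hUdet
    · calc X = L * blockCons (X 0 0) (A * S * C) * U := hSeq ▸ hXeq
        _ = L * (blockCons (X 0 0) A * blockCons 1 S * blockCons 1 C) * U := by
          rw [blockCons_mul, blockCons_mul, mul_one, mul_one]
        _ = _ := by simp only [Matrix.mul_assoc]

end Matrix

open Matrix

theorem stmt5_general (k : Type*) [Field k] (m n r : ℕ) (hrm : r ≤ m) (hrn : r ≤ n)
    (E : Matrix (Fin m) (Fin n) k)
    (hE : E = Matrix.of fun (i : Fin m) (j : Fin n) => if (i : ℕ) = (j : ℕ) ∧ (i : ℕ) < r then (1 : k) else 0)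
    (X : Matrix (Fin m) (Fin n) k) (hX : X.rank ≤ r) :
    (∃ (A : Matrix (Fin m) (Fin m) k) (B : Matrix (Fin n) (Fin n) k),
        IsUnit A ∧ IsUnit B ∧
        (∀ i j : Fin m, (i : ℕ) < (j : ℕ) → A i j = 0) ∧
        (∀ i j : Fin n, (j : ℕ) < (i : ℕ) → B i j = 0) ∧
        X = A * E * B⁻¹) ↔
      (∀ (i : ℕ) (hi : i ≤ r), 1 ≤ i →
        (X.submatrix (Fin.castLE (hi.trans hrm)) (Fin.castLE (hi.trans hrn))).det ≠ 0) := by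
  change E = rankNormalForm r at hE
  subst hE
  constructor
  · rintro ⟨A, B, hA, hB, hAl, hBu, rfl⟩ i hi -
    have hAl : A.IsLowerTriangular := fun _ _ h => hAl _ _ h
    have hBu : B.IsUpperTriangular := fun _ _ h => hBu _ _ h
    rw [det_submatrix_castLE_mul_mul_ne_zero_iff hAl ((isUnit_iff_isUnit_det A).mp hA) hBu.inv
      (isUnit_nonsing_inv_det _ ((isUnit_iff_isUnit_det B).mp hB)),
      submatrix_castLE_rankNormalForm hi, det_one]
    exact one_ne_zero
  · intro hmin
    obtain ⟨A, S, C, hA, hAdet, hC, hCdet, hS, rfl⟩ :=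
      exists_lower_mul_rankNormalFormOffCorner_mul_upper r hrm hrn X hmin
    have hSE : S = rankNormalForm r := hS.eq_of_rank_le <| by
      rwa [rank_mul_eq_left_of_isUnit_det _ _ hCdet,
        rank_mul_eq_right_of_isUnit_det _ _ hAdet] at hX
    refine ⟨A, C⁻¹, (isUnit_iff_isUnit_det A).mpr hAdet,
      (isUnit_iff_isUnit_det _).mpr (isUnit_nonsing_inv_det _ hCdet), fun _ _ h => hA h,
      fun _ _ h => hC.inv h, by rw [nonsing_inv_nonsing_inv _ hCdet, hSE]⟩

/-- A matrix `X` of rank `≤ r` can be written as `X = A · E_r · B⁻¹` with `A ∈ GL_m(k)`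
lower triangular and `B ∈ GL_n(k)` upper triangular if and only if its first `r`
leading principal minors are nonzero. -/
theorem stmt5 (k : Type*) [Field k] [IsAlgClosed k] (m n r : ℕ) (hrm : r ≤ m) (hrn : r ≤ n)
    (E : Matrix (Fin m) (Fin n) k)
    (hE : E = Matrix.of fun (i : Fin m) (j : Fin n) => if (i : ℕ) = (j : ℕ) ∧ (i : ℕ) < r then (1 : k) else 0)
    (X : Matrix (Fin m) (Fin n) k) (hX : X.rank ≤ r) :
    (∃ (A : Matrix (Fin m) (Fin m) k) (B : Matrix (Fin n) (Fin n) k),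
        IsUnit A ∧ IsUnit B ∧
        (∀ i j : Fin m, (i : ℕ) < (j : ℕ) → A i j = 0) ∧
        (∀ i j : Fin n, (j : ℕ) < (i : ℕ) → B i j = 0) ∧
        X = A * E * B⁻¹) ↔
      (∀ (i : ℕ) (hi : i ≤ r), 1 ≤ i →
        (X.submatrix (Fin.castLE (hi.trans hrm)) (Fin.castLE (hi.trans hrn))).det ≠ 0) :=
  stmt5_general k m n r hrm hrn E hE X hX
end

section
/- Let k be an algebraically closed field and l, m, n, r, s integers with 0 ≤ r ≤ l, 0 ≤ s ≤ n and r + s ≤ m. Let E ∈ Mat_{l×m}(k) have E_{ij} = 1 iff i = j ≤ r and F ∈ Mat_{m×n}(k) have F_{ij} = 1 iff i > m−s, j > n−s and i − (m−s) = j − (n−s), all other entries being 0. For (g₁, g₂, g₃) ∈ GL_l(k) × GL_m(k) × GL_n(k), one has g₁·E·g₂⁻¹ = E and g₂·F·g₃⁻¹ = F if and only if: (g₁)_{ij} = 0 whenever i > r and j ≤ r; (g₂)_{ij} = 0 whenever (i ≤ r and j > r) or (i ≤ m−s and j > m−s); (g₃)_{ij} = 0 whenever i > n−s and j ≤ n−s;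 (g₁)_{ij} = (g₂)_{ij} for all i, j ≤ r; and (g₂)_{m−s+i, m−s+j} = (g₃)_{n−s+i, n−s+j} for all 1 ≤ i, j ≤ s. -/
/-!
`E` and `F` are the matrices of partial bijections: `E` matches the first `r` indices of `Fin l`
with the first `r` of `Fin m`, and `F` the last `s` indices of `Fin m` with the last `s` of
`Fin n`. As `g₂` and `g₃` are invertible, the stabiliser equations read `g₁ E = E g₂` and
`g₂ F = F g₃`. For the matrix `P` of a partial bijection `e`, every entry of `A P` and of `P B`
is an entry of `A` resp. `B` or zero, so `A P = P B` says exactly that `A` and `B` agree along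
`e`, that `A` vanishes from rows outside the domain of `e` to columns inside it, and that `B`
vanishes from rows inside the range of `e` to columns outside it. For blocks of consecutive
indices these are the block-triangularity conditions and the identification of diagonal blocks.
-/

open Matrix

namespace PEquiv

variable {α β R : Type*} [Fintype α] [Fintype β] [DecidableEq β] [NonAssocSemiring R]

theorem mul_toMatrix_eq_toMatrix_mul_iff (e : α ≃. β) (A : Matrix α α R) (B : Matrix β β R) :
    A * (e.toMatrix : Matrix α β R) = (e.toMatrix : Matrix α β R) * B ↔
      (∀ i i' j j', j ∈ e i → j' ∈ e i' → A i i' = B j j') ∧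
      (∀ i i', ¬ (e i).isSome → (e i').isSome → A i i' = 0) ∧
      (∀ j j', (e.symm j).isSome → ¬ (e.symm j').isSome → B j j' = 0) := by
  rw [← Matrix.ext_iff]
  simp only [mul_toMatrix_apply, toMatrix_mul_apply, Option.not_isSome_iff_eq_none]
  simp only [Option.isSome_iff_exists]
  constructor
  · intro h
    refine ⟨fun i i' j j' hj hj' => ?_, ?_, ?_⟩
    · simpa [e.eq_some_iff.mpr hj', Option.mem_def.mp hj] using h i j'
    · rintro i i' hi ⟨j', hj'⟩
      simpa [e.eq_some_iff.mpr hj', hi] using h i j'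
    · rintro j j' ⟨i, hi⟩ hj'
      simpa [e.eq_some_iff.mp hi, hj'] using (h i j').symm
  · rintro ⟨hagree, hrow, hcol⟩ i j'
    rcases hi : e i with _ | j <;> rcases hj' : e.symm j' with _ | i'
    · rfl
    · exact hrow i i' hi ⟨j', e.eq_some_iff.mp hj'⟩
    · exact (hcol j j' ⟨i, e.eq_some_iff.mpr hi⟩ hj').symm
    · exact hagree i i' j j' hi (e.eq_some_iff.mp hj')

/-- The partial equivalence `a + p ↦ b + p` for `p < t`. -/
def finBlock {l m : ℕ} (a b t : ℕ) : Fin l ≃. Fin m where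
  toFun i := if h : a ≤ i ∧ i < a + t ∧ i + b - a < m then some ⟨i + b - a, h.2.2⟩ else none
  invFun j := if h : b ≤ j ∧ j < b + t ∧ j + a - b < l then some ⟨j + a - b, h.2.2⟩ else none
  inv i j := by
    have := i.isLt; have := j.isLt
    simp only [Option.dite_none_right_eq_some, Option.some.injEq, Fin.ext_iff, exists_prop]
    omega

section finBlock

variable {l m : ℕ} (a b t : ℕ)

theorem mem_finBlock_iff {i : Fin l} {j : Fin m} :
    j ∈ finBlock a b t i ↔ a ≤ i ∧ i < a + t ∧ (j : ℕ) + a = i + b := by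
  have := j.isLt
  simp only [finBlock, coe_mk, Option.mem_def, Option.dite_none_right_eq_some, Option.some.injEq,
    Fin.ext_iff, exists_prop]
  omega

theorem finBlock_symm : (finBlock a b t : Fin l ≃. Fin m).symm = finBlock b a t := rfl

theorem isSome_finBlock_iff {i : Fin l} (hb : b + t ≤ m) :
    ((finBlock a b t : Fin l ≃. Fin m) i).isSome ↔ a ≤ i ∧ i < a + t := by
  have := i.isLt
  simp only [finBlock, coe_mk, Option.isSome_dite]
  omega

end finBlock

theorem mul_toMatrix_finBlock_eq_iff {l m a b t : ℕ} (ha : a + t ≤ l) (hb : b + t ≤ m)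
    (A : Matrix (Fin l) (Fin l) R) (B : Matrix (Fin m) (Fin m) R) :
    A * ((finBlock a b t).toMatrix : Matrix (Fin l) (Fin m) R) =
        ((finBlock a b t).toMatrix : Matrix (Fin l) (Fin m) R) * B ↔
      (∀ i j : Fin l, ¬ (a ≤ i ∧ i < a + t) → a ≤ j ∧ j < a + t → A i j = 0) ∧
      (∀ i j : Fin m, b ≤ i ∧ i < b + t → ¬ (b ≤ j ∧ j < b + t) → B i j = 0) ∧
      (∀ (p q : ℕ) (hp : p < t) (hq : q < t),
        A ⟨a + p, by omega⟩ ⟨a + q, by omega⟩ = B ⟨b + p, by omega⟩ ⟨b + q, by omega⟩) := by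
  rw [mul_toMatrix_eq_toMatrix_mul_iff, finBlock_symm]
  simp only [mem_finBlock_iff, isSome_finBlock_iff _ _ _ hb, isSome_finBlock_iff _ _ _ ha]
  rw [and_comm, and_assoc]
  refine and_congr_right' (and_congr_right' ⟨fun h p q hp hq => ?_, fun h i i' j j' hi hi' => ?_⟩)
  · exact h _ _ _ _ (by dsimp only; omega) (by dsimp only; omega)
  · convert h (i - a) (i' - a) (by omega) (by omega) using 2 <;> ext <;> dsimp only <;> omega

end PEquiv

/-- Computation of the stabiliser of the base point `E_{rs} = (E, F)` of the variety of
complexes in `GL_l(k) × GL_m(k) × GL_n(k)`. -/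
theorem stmt6 (k : Type*) [Field k] (l m n r s : ℕ)
    (hrl : r ≤ l) (hsn : s ≤ n) (hrsm : r + s ≤ m)
    (E : Matrix (Fin l) (Fin m) k)
    (hE : E = Matrix.of fun (i : Fin l) (j : Fin m) => if (i : ℕ) = (j : ℕ) ∧ (i : ℕ) < r then (1 : k) else 0)
    (F : Matrix (Fin m) (Fin n) k)
    (hF : F = Matrix.of fun (i : Fin m) (j : Fin n) =>
      if m - s ≤ (i : ℕ) ∧ n - s ≤ (j : ℕ) ∧ (i : ℕ) - (m - s) = (j : ℕ) - (n - s)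
        then (1 : k) else 0)
    (g₁ : Matrix (Fin l) (Fin l) k) (g₂ : Matrix (Fin m) (Fin m) k)
    (g₃ : Matrix (Fin n) (Fin n) k)
    (h₂ : IsUnit g₂) (h₃ : IsUnit g₃) :
    (g₁ * E * g₂⁻¹ = E ∧ g₂ * F * g₃⁻¹ = F) ↔
      ((∀ i j : Fin l, r ≤ (i : ℕ) → (j : ℕ) < r → g₁ i j = 0) ∧
       (∀ i j : Fin m,
         (((i : ℕ) < r ∧ r ≤ (j : ℕ)) ∨ ((i : ℕ) < m - s ∧ m - s ≤ (j : ℕ))) → g₂ i j = 0) ∧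
       (∀ i j : Fin n, n - s ≤ (i : ℕ) → (j : ℕ) < n - s → g₃ i j = 0) ∧
       (∀ (i j : ℕ) (hi : i < r) (hj : j < r),
         g₁ ⟨i, hi.trans_le hrl⟩ ⟨j, hj.trans_le hrl⟩ =
           g₂ ⟨i, by omega⟩ ⟨j, by omega⟩) ∧
       (∀ (i j : ℕ) (hi : i < s) (hj : j < s),
         g₂ ⟨m - s + i, by omega⟩ ⟨m - s + j, by omega⟩ =
           g₃ ⟨n - s + i, by omega⟩ ⟨n - s + j, by omega⟩)) := by
  have hE' : E = (PEquiv.finBlock 0 0 r).toMatrix := by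
    ext i j
    simp only [hE, of_apply, PEquiv.toMatrix_apply, PEquiv.mem_finBlock_iff]
    exact if_congr (by omega) rfl rfl
  have hF' : F = (PEquiv.finBlock (m - s) (n - s) s).toMatrix := by
    ext i j
    have := i.isLt; have := j.isLt
    simp only [hF, of_apply, PEquiv.toMatrix_apply, PEquiv.mem_finBlock_iff]
    exact if_congr (by omega) rfl rfl
  let := h₂.invertible
  let := h₃.invertible
  rw [mul_inv_eq_iff_eq_mul_of_invertible, mul_inv_eq_iff_eq_mul_of_invertible, hE', hF',
    PEquiv.mul_toMatrix_finBlock_eq_iff (by omega) (by omega),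
    PEquiv.mul_toMatrix_finBlock_eq_iff (by omega) (by omega)]
  simp only [zero_add, Nat.zero_le, true_and, Nat.sub_add_cancel (by omega : s ≤ m),
    Nat.sub_add_cancel hsn, Fin.is_lt, and_true, not_le, not_lt, or_imp, forall_and]
  tauto
end
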